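/- Define 𝒢₀(σ, ρ) := g(U(ρ), σ, ρ) · ( f_WM(U(ρ), ρ) − f_SF(U(ρ), U′(ρ) − U(ρ)/ρ, ρ·U′(ρ), ρ) ) for σ ≥ 0 and ρ ∈ (0, 1]. Then for every such σ and ρ the partial derivative of 𝒢₀ with respect to σ exists and equals ∂_σ𝒢₀(σ, ρ) = −40(5 + 3ρ²)²(105 − 42ρ² + ρ⁴)·σ / ( (5 − ρ²)^{3/2} · (64(5 − ρ²) + σ²(5 + 3ρ²)²)² ). -/

import Mathlib

open Real Set

/-- The blowup profile `U(ρ) = 2 arctan(2ρ/√(5-ρ²))`. -/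
noncomputable def U (ρ : ℝ) : ℝ := 2 * Real.arctan (2 * ρ / Real.sqrt (5 - ρ ^ 2))

/-- The strong field nonlinearity `f_SF`. -/
noncomputable def fSF (x y z r : ℝ) : ℝ :=
  -(1 / r) * Real.cot x * (z ^ 2 - y ^ 2) - (2 / r ^ 2) * (1 - x * Real.cot x) * y
    - ((3 / 2) * Real.sin (2 * x) - 2 * x - x ^ 2 * Real.cot x) / r ^ 3

/-- The wave maps nonlinearity `f_WM`. -/
noncomputable def fWM (x r : ℝ) : ℝ := (4 * x - 2 * Real.sin (2 * x)) / r ^ 3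

/-- The multiplier `g(x,σ,r) = (σ² + 4sin²(x)/r²)⁻¹`. -/
noncomputable def gMult (x σ r : ℝ) : ℝ := (σ ^ 2 + 4 * Real.sin x ^ 2 / r ^ 2)⁻¹

/-- The zeroth order coefficient `𝒢₀(σ,ρ)`. -/
noncomputable def G0 (σ ρ : ℝ) : ℝ :=
  gMult (U ρ) σ ρ * (fWM (U ρ) ρ - fSF (U ρ) (deriv U ρ - U ρ / ρ) (ρ * deriv U ρ) ρ)

lemma sinU (ρ : ℝ) (h1 : 0 < ρ) (h2 : ρ ≤ 1) :
    Real.sin (U ρ) = 4 * ρ * Real.sqrt (5 - ρ ^ 2) / (5 + 3 * ρ ^ 2) := by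
  have hq : (0:ℝ) < 5 - ρ ^ 2 := by nlinarith
  set s := Real.sqrt (5 - ρ ^ 2) with hs_def
  have hs : 0 < s := Real.sqrt_pos.mpr hq
  have hss : s ^ 2 = 5 - ρ ^ 2 := Real.sq_sqrt hq.le
  set t := 2 * ρ / s with ht_def
  have hwpos : (0:ℝ) < 1 + t ^ 2 := by positivity
  have hw : Real.sqrt (1 + t ^ 2) ^ 2 = 1 + t ^ 2 := Real.sq_sqrt hwpos.le
  have hwne : Real.sqrt (1 + t ^ 2) ≠ 0 := by positivity
  rw [U, Real.sin_two_mul, Real.sin_arctan, Real.cos_arctan]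
  rw [show (2:ℝ) * (t / Real.sqrt (1 + t ^ 2)) * (1 / Real.sqrt (1 + t ^ 2))
      = 2 * t / Real.sqrt (1 + t ^ 2) ^ 2 by ring]
  rw [hw, ht_def]
  rw [show (1:ℝ) + (2 * ρ / s) ^ 2 = (s ^ 2 + 4 * ρ ^ 2) / s ^ 2 by field_simp; ring]
  field_simp
  linear_combination (-4) * hss

lemma cosU (ρ : ℝ) (h1 : 0 < ρ) (h2 : ρ ≤ 1) :
    Real.cos (U ρ) = (5 - 5 * ρ ^ 2) / (5 + 3 * ρ ^ 2) := by
  have hq : (0:ℝ) < 5 - ρ ^ 2 := by nlinarith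
  set s := Real.sqrt (5 - ρ ^ 2) with hs_def
  have hs : 0 < s := Real.sqrt_pos.mpr hq
  have hss : s ^ 2 = 5 - ρ ^ 2 := Real.sq_sqrt hq.le
  set t := 2 * ρ / s with ht_def
  have hwpos : (0:ℝ) < 1 + t ^ 2 := by positivity
  have hw : Real.sqrt (1 + t ^ 2) ^ 2 = 1 + t ^ 2 := Real.sq_sqrt hwpos.le
  have hwne : Real.sqrt (1 + t ^ 2) ≠ 0 := by positivity
  rw [U, Real.cos_two_mul, Real.cos_arctan]
  rw [show (2:ℝ) * (1 / Real.sqrt (1 + t ^ 2)) ^ 2 - 1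
      = 2 / Real.sqrt (1 + t ^ 2) ^ 2 - 1 by ring]
  rw [hw, ht_def]
  rw [show (1:ℝ) + (2 * ρ / s) ^ 2 = (s ^ 2 + 4 * ρ ^ 2) / s ^ 2 by field_simp; ring]
  field_simp
  linear_combination (8 * ρ ^ 2) * hss

lemma derivU (ρ : ℝ) (h1 : 0 < ρ) (h2 : ρ ≤ 1) :
    HasDerivAt U (20 / ((5 + 3 * ρ ^ 2) * Real.sqrt (5 - ρ ^ 2))) ρ := by
  have hq : (0:ℝ) < 5 - ρ ^ 2 := by nlinarith
  set s := Real.sqrt (5 - ρ ^ 2) with hs_def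
  have hs : 0 < s := Real.sqrt_pos.mpr hq
  have hss : s ^ 2 = 5 - ρ ^ 2 := Real.sq_sqrt hq.le
  have hpoly : HasDerivAt (fun x : ℝ => 5 - x ^ 2) (-(2 * ρ)) ρ := by
    simpa using (hasDerivAt_pow 2 ρ).const_sub 5
  have hsq : HasDerivAt (fun x : ℝ => Real.sqrt (5 - x ^ 2)) (-(2 * ρ) / (2 * s)) ρ :=
    hpoly.sqrt hq.ne'
  have hnum : HasDerivAt (fun x : ℝ => 2 * x) 2 ρ := by
    simpa using (hasDerivAt_id ρ).const_mul 2
  have hdiv : HasDerivAt (fun x : ℝ => 2 * x / Real.sqrt (5 - x ^ 2))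
      ((2 * s - 2 * ρ * (-(2 * ρ) / (2 * s))) / s ^ 2) ρ := hnum.div hsq hs.ne'
  have harc : HasDerivAt (fun x : ℝ => 2 * Real.arctan (2 * x / Real.sqrt (5 - x ^ 2)))
      (2 * (1 / (1 + (2 * ρ / s) ^ 2) * ((2 * s - 2 * ρ * (-(2 * ρ) / (2 * s))) / s ^ 2))) ρ := by
    exact (hdiv.arctan).const_mul 2
  have : U = fun x : ℝ => 2 * Real.arctan (2 * x / Real.sqrt (5 - x ^ 2)) := rfl
  rw [this]
  convert harc using 1
  have h1t : (1:ℝ) + (2 * ρ / s) ^ 2 = (s ^ 2 + 4 * ρ ^ 2) / s ^ 2 := by field_simp; ring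
  rw [h1t]
  field_simp
  linear_combination (-12 * ρ ^ 2) * hss

lemma Cval (ρ : ℝ) (h1 : 0 < ρ) (h2 : ρ ≤ 1) :
    fWM (U ρ) ρ - fSF (U ρ) (deriv U ρ - U ρ / ρ) (ρ * deriv U ρ) ρ
      = 20 * (105 - 42 * ρ ^ 2 + ρ ^ 4) / (Real.sqrt (5 - ρ ^ 2) ^ 3 * (5 + 3 * ρ ^ 2) ^ 2) := by
  have hq : (0:ℝ) < 5 - ρ ^ 2 := by nlinarith
  set s := Real.sqrt (5 - ρ ^ 2) with hs_def
  have hs : 0 < s := Real.sqrt_pos.mpr hq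
  have hss : s ^ 2 = 5 - ρ ^ 2 := Real.sq_sqrt hq.le
  have hd : deriv U ρ = 20 / ((5 + 3 * ρ ^ 2) * s) := (derivU ρ h1 h2).deriv
  have hP : (0:ℝ) < 5 + 3 * ρ ^ 2 := by positivity
  rw [fWM, fSF, Real.cot_eq_cos_div_sin, Real.sin_two_mul, sinU ρ h1 h2, cosU ρ h1 h2, hd]
  have hsin : 4 * ρ * s / (5 + 3 * ρ ^ 2) ≠ 0 := by positivity
  field_simp
  linear_combination ((400 : ℝ) * ρ ^ 2 * s ^ 1 + (960 : ℝ) * ρ ^ 4 * s ^ 1 + (-80 : ℝ) * ρ ^ 6 * s ^ 1 + (-80 : ℝ) * ρ ^ 2 * s ^ 3 + (80 : ℝ) * ρ ^ 4 * s ^ 3) * hss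

theorem zeroth_order_sigma_derivative :
    ∀ σ ρ : ℝ, 0 ≤ σ → 0 < ρ → ρ ≤ 1 →
      HasDerivAt (fun s => G0 s ρ)
        (-40 * (5 + 3 * ρ ^ 2) ^ 2 * (105 - 42 * ρ ^ 2 + ρ ^ 4) * σ /
          ((5 - ρ ^ 2) ^ ((3 : ℝ) / 2) *
            (64 * (5 - ρ ^ 2) + σ ^ 2 * (5 + 3 * ρ ^ 2) ^ 2) ^ 2)) σ := by
  intro σ ρ hσ h1 h2
  have hq : (0:ℝ) < 5 - ρ ^ 2 := by nlinarith
  set s := Real.sqrt (5 - ρ ^ 2) with hs_def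
  have hs : 0 < s := Real.sqrt_pos.mpr hq
  have hss : s ^ 2 = 5 - ρ ^ 2 := Real.sq_sqrt hq.le
  have hP : (0:ℝ) < 5 + 3 * ρ ^ 2 := by positivity
  have hA : 4 * Real.sin (U ρ) ^ 2 / ρ ^ 2 = 64 * (5 - ρ ^ 2) / (5 + 3 * ρ ^ 2) ^ 2 := by
    rw [sinU ρ h1 h2]
    field_simp
    linear_combination 64 * hss
  have hApos : 0 < 4 * Real.sin (U ρ) ^ 2 / ρ ^ 2 := by
    rw [hA]; positivity
  set C := fWM (U ρ) ρ - fSF (U ρ) (deriv U ρ - U ρ / ρ) (ρ * deriv U ρ) ρ with hC_def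
  have hC : C = 20 * (105 - 42 * ρ ^ 2 + ρ ^ 4) / (s ^ 3 * (5 + 3 * ρ ^ 2) ^ 2) :=
    Cval ρ h1 h2
  have hfun : (fun σ' => G0 σ' ρ)
      = fun σ' => (σ' ^ 2 + 4 * Real.sin (U ρ) ^ 2 / ρ ^ 2)⁻¹ * C := by
    funext x; rfl
  have hd1 : HasDerivAt (fun x : ℝ => x ^ 2 + 4 * Real.sin (U ρ) ^ 2 / ρ ^ 2) (2 * σ) σ := by
    simpa using (hasDerivAt_pow 2 σ).add_const (4 * Real.sin (U ρ) ^ 2 / ρ ^ 2)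
  have hne : σ ^ 2 + 4 * Real.sin (U ρ) ^ 2 / ρ ^ 2 ≠ 0 := by positivity
  have hd2 := (hd1.inv hne).mul_const C
  rw [hfun]
  convert hd2 using 1
  · rfl
  · rfl
  · rfl
  rw [hA, hC]
  have hrw : (5 - ρ ^ 2) ^ ((3:ℝ)/2) = s ^ 3 := by
    rw [show ((3:ℝ)/2) = (1/2) * 3 by norm_num, Real.rpow_mul hq.le, ← Real.sqrt_eq_rpow,
      show ((3:ℝ)) = ((3:ℕ):ℝ) by norm_num, Real.rpow_natCast]
  rw [hrw]
  have hden : (0:ℝ) < 64 * (5 - ρ ^ 2) + σ ^ 2 * (5 + 3 * ρ ^ 2) ^ 2 := by positivity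
  have hden2 : (0:ℝ) < σ ^ 2 + 64 * (5 - ρ ^ 2) / (5 + 3 * ρ ^ 2) ^ 2 := by positivity
  field_simp
  ring
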